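/- arXiv:0910.5896 — 3 statements merged into one kernel-verified Lean document; each statement's English description precedes it below -/
import Mathlib

section
/- Let n ∈ ℂ and define, for functions f, g on ℂ, (f ⊥ g)(u) = f(u)g(u) + f(u-τ)g(u-τ) + (n/2)(f(u)g(u-τ) + f(u-τ)g(u)). If f and g both satisfy f(u+2τ) + n·f(u+τ) + f(u) = 0 for all u, then (f ⊥ g)(u + τ) = (f ⊥ g)(u) for all u. -/
/-- If `f` and `g` both satisfy the three-term recurrence
`f(u+2τ) + n·f(u+τ) + f(u) = 0`, then the bilinear quantity
`(f ⊥ g)(u) = f(u)g(u) + f(u-τ)g(u-τ) + (n/2)(f(u)g(u-τ) + f(u-τ)g(u))`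
is invariant under translation by `τ`. -/
theorem stmt3 (n τ : ℂ) (f g : ℂ → ℂ)
    (hf : ∀ u, f (u + 2 * τ) + n * f (u + τ) + f u = 0)
    (hg : ∀ u, g (u + 2 * τ) + n * g (u + τ) + g u = 0) :
    ∀ u, (f (u + τ) * g (u + τ) + f (u + τ - τ) * g (u + τ - τ)
            + (n / 2) * (f (u + τ) * g (u + τ - τ) + f (u + τ - τ) * g (u + τ)))
        = (f u * g u + f (u - τ) * g (u - τ)
            + (n / 2) * (f u * g (u - τ) + f (u - τ) * g u)) := by
  intro u
  have hf' := hf (u - τ)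
  have hg' := hg (u - τ)
  have e1 : u - τ + 2 * τ = u + τ := by ring
  have e2 : u - τ + τ = u := by ring
  rw [e1, e2] at hf' hg'
  have hfe : f (u + τ) = -(n * f u) - f (u - τ) := by linear_combination hf'
  have hge : g (u + τ) = -(n * g u) - g (u - τ) := by linear_combination hg'
  rw [show u + τ - τ = u from by ring, hfe, hge]
  ring
end

section
/- Let n ∈ ℂ and f, g : ℂ → ℂ with (f ⊥ g)(u) := f(u)g(u) + f(u-τ)g(u-τ) + (n/2)(f(u)g(u-τ) + f(u-τ)g(u)). If f satisfies the recurrence f(u+2τ) + n f(u+τ) + f(u) = 0 and (f ⊥ g)(u+τ) = (f ⊥ g)(u) for all u, then (f(u₀+τ) - f(u₀-τ))·(g(u₀+τ) + n g(u₀) + g(u₀-τ)) = 0; in particular, if f(u₀+τ) - f(u₀-τ) ≠ 0, then g(u₀+τ) + n g(u₀) + g(u₀-τ) = 0. -/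
/-- Algebraic identity underlying the saddle point equation: if `f` satisfies the recurrence
`f(u+2τ) + n f(u+τ) + f(u) = 0` and `(f ⊥ g)` is invariant under τ-translation, then at every
point `u₀` we have the factorized identity
`(f(u₀+τ) - f(u₀-τ))·(g(u₀+τ) + n g(u₀) + g(u₀-τ)) = 0`. -/
theorem stmt4 (n τ : ℂ) (f g : ℂ → ℂ)
    (hf : ∀ u, f (u + 2 * τ) + n * f (u + τ) + f u = 0)
    (hperp : ∀ u,
      (f (u + τ) * g (u + τ) + f (u + τ - τ) * g (u + τ - τ)
        + (n / 2) * (f (u + τ) * g (u + τ - τ) + f (u + τ - τ) * g (u + τ)))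
      = (f u * g u + f (u - τ) * g (u - τ)
          + (n / 2) * (f u * g (u - τ) + f (u - τ) * g u)))
    (u₀ : ℂ) (hjump : f (u₀ + τ) - f (u₀ - τ) ≠ 0) :
    (f (u₀ + τ) - f (u₀ - τ)) * (g (u₀ + τ) + n * g u₀ + g (u₀ - τ)) = 0 := by
  have h1 := hperp u₀
  simp only [add_sub_cancel_right] at h1
  have h2 : f (u₀ + τ) + n * f u₀ + f (u₀ - τ) = 0 := by
    have := hf (u₀ - τ)
    have e1 : u₀ - τ + 2 * τ = u₀ + τ := by ring
    have e2 : u₀ - τ + τ = u₀ := by ring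
    rw [e1, e2] at this
    exact this
  linear_combination 2 * h1 + (g (u₀ - τ) - g (u₀ + τ)) * h2
end

section
/- Let τ ∈ ℂ with Im τ > 0 and μ ∈ (0,1). The series ℘_μ(w) = ∑_{m∈ℤ} e^{iπ(μ-1)m} · π²/sin²(π(w + mτ)) converges absolutely for every w ∈ ℂ with w + mτ ∉ ℤ for all m ∈ ℤ, and defines a function satisfying ℘_μ(w+1) = ℘_μ(w) and ℘_μ(w+τ) = e^{iπ(1-μ)} ℘_μ(w). -/
open Complex

/-!
The phase `e^{iπ(μ-1)m}` has modulus one, so absolute convergence reduces to that of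
`∑ₘ ‖sin (a + m b)‖⁻²` with `Im b ≠ 0`. Since `‖sin z‖ ≥ sinh |Im z| ≥ e^{|Im z|} / 3` once
`|Im z| ≥ 1`, these terms decay like `e^{-2 |m| |Im b|}`. Periodicity under `w ↦ w + 1` holds
termwise because `sin (x + π)² = sin x²`; under `w ↦ w + τ` the summation index shifts by one,
which pulls out one factor of the phase.
-/

theorem Complex.sinh_abs_im_le_norm_sin (z : ℂ) : Real.sinh |z.im| ≤ ‖sin z‖ := by
  have hsin : 2 * sin z = (exp (-z * I) - exp (z * I)) * I := by
    rw [sin]; ring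
  have h2 : ‖(2 : ℂ) * sin z‖ = 2 * ‖sin z‖ := by simp
  have key : |Real.exp z.im - Real.exp (-z.im)| ≤ 2 * ‖sin z‖ := by
    rw [← h2, hsin, norm_mul, norm_I, mul_one]
    convert abs_norm_sub_norm_le (exp (-z * I)) (exp (z * I)) using 3 <;> simp [norm_exp]
  rw [← Real.abs_sinh, Real.sinh_eq, abs_div, abs_two]
  linarith

theorem Real.exp_div_three_le_sinh {t : ℝ} (ht : 1 ≤ t) : exp t / 3 ≤ sinh t := by
  have hprod : exp (-t) * exp t = 1 := by rw [← exp_add]; simp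
  have hge : 2 ≤ exp t := by linarith [add_one_le_exp t]
  rw [sinh_eq]
  nlinarith [exp_pos (-t)]

theorem Complex.inv_norm_sin_sq_le {z : ℂ} (hz : 1 ≤ |z.im|) :
    (‖sin z‖ ^ 2)⁻¹ ≤ 9 * Real.exp (-2 * |z.im|) := by
  have hlow : Real.exp |z.im| / 3 ≤ ‖sin z‖ :=
    (Real.exp_div_three_le_sinh hz).trans (sinh_abs_im_le_norm_sin z)
  calc (‖sin z‖ ^ 2)⁻¹ ≤ ((Real.exp |z.im| / 3) ^ 2)⁻¹ := by gcongr
    _ = 9 * Real.exp (-2 * |z.im|) := by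
      rw [show -2 * |z.im| = -|z.im| + -|z.im| by ring, Real.exp_add, Real.exp_neg]
      ring

theorem summable_inv_norm_sin_sq_nat (a b : ℂ) (hb : b.im ≠ 0) :
    Summable fun n : ℕ => (‖sin (a + n * b)‖ ^ 2)⁻¹ := by
  set t : ℕ → ℝ := fun n => n * |b.im| - |a.im|
  have ht_le (n : ℕ) : t n ≤ |(a + n * b).im| := by
    rw [show (a + n * b).im = a.im + n * b.im by simp]
    calc t n = |(n : ℝ) * b.im| - |a.im| := by simp [t, abs_mul]
      _ ≤ |a.im + n * b.im| := by
        have := abs_sub_abs_le_abs_sub ((n : ℝ) * b.im) (-a.im)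
        rwa [abs_neg, sub_neg_eq_add, add_comm] at this
  have ht : Filter.Tendsto t Filter.atTop Filter.atTop :=
    Filter.tendsto_atTop_add_const_right _ _
      (tendsto_natCast_atTop_atTop.atTop_mul_const (abs_pos.mpr hb))
  have hr : Real.exp (-2 * |b.im|) < 1 := by
    rw [Real.exp_lt_one_iff]; have := abs_pos.mpr hb; linarith
  refine .of_norm_bounded_eventually_nat
    (((summable_geometric_of_lt_one (Real.exp_pos _).le hr).mul_left
      (9 * Real.exp (2 * |a.im|)))) ?_
  filter_upwards [ht.eventually_ge_atTop 1] with n hn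
  rw [Real.norm_of_nonneg (by positivity)]
  calc (‖sin (a + n * b)‖ ^ 2)⁻¹ ≤ 9 * Real.exp (-2 * |(a + n * b).im|) :=
        inv_norm_sin_sq_le (hn.trans (ht_le n))
    _ ≤ 9 * Real.exp (-2 * t n) := by gcongr 9 * Real.exp ?_; linarith [ht_le n]
    _ = 9 * Real.exp (2 * |a.im|) * Real.exp (-2 * |b.im|) ^ n := by
      rw [← Real.exp_nat_mul, mul_assoc, ← Real.exp_add]; congr 2; simp only [t]; ring

theorem summable_inv_norm_sin_sq_int (a b : ℂ) (hb : b.im ≠ 0) :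
    Summable fun m : ℤ => (‖sin (a + m * b)‖ ^ 2)⁻¹ := by
  refine .of_nat_of_neg (by simpa using summable_inv_norm_sin_sq_nat a b hb) ?_
  simpa using summable_inv_norm_sin_sq_nat a (-b) (by simpa using hb)

noncomputable def twistedWeierstrassTerm (τ : ℂ) (μ : ℝ) (w : ℂ) (m : ℤ) : ℂ :=
  exp (Real.pi * I * ((μ : ℂ) - 1) * m) * (Real.pi : ℂ) ^ 2 / sin (Real.pi * (w + m * τ)) ^ 2

namespace twistedWeierstrassTerm

variable (τ : ℂ) (μ : ℝ) (w : ℂ)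

theorem norm_eq (m : ℤ) :
    ‖twistedWeierstrassTerm τ μ w m‖ =
      Real.pi ^ 2 * (‖sin (Real.pi * w + m * (Real.pi * τ))‖ ^ 2)⁻¹ := by
  have hphase : ‖exp (Real.pi * I * ((μ : ℂ) - 1) * m)‖ = 1 := by
    convert norm_exp_ofReal_mul_I (Real.pi * (μ - 1) * m) using 3
    push_cast; ring
  rw [twistedWeierstrassTerm, norm_div, norm_mul, hphase, norm_pow, norm_pow, norm_real,
    Real.norm_of_nonneg Real.pi_pos.le, one_mul, div_eq_mul_inv]
  congr 5
  ring

theorem summable_norm (hτ : τ.im ≠ 0) : Summable fun m => ‖twistedWeierstrassTerm τ μ w m‖ := by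
  simp only [norm_eq]
  exact (summable_inv_norm_sin_sq_int _ _ (by simpa using hτ)).mul_left _

theorem add_one (m : ℤ) :
    twistedWeierstrassTerm τ μ (w + 1) m = twistedWeierstrassTerm τ μ w m := by
  rw [twistedWeierstrassTerm, twistedWeierstrassTerm,
    show (Real.pi : ℂ) * (w + 1 + m * τ) = Real.pi * (w + m * τ) + Real.pi by ring,
    sin_add_pi, neg_sq]

theorem add_period (m : ℤ) :
    twistedWeierstrassTerm τ μ (w + τ) m =
      exp (Real.pi * I * (1 - (μ : ℂ))) * twistedWeierstrassTerm τ μ w (m + 1) := by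
  have hphase : exp (Real.pi * I * ((μ : ℂ) - 1) * m) =
      exp (Real.pi * I * (1 - (μ : ℂ))) * exp (Real.pi * I * ((μ : ℂ) - 1) * ↑(m + 1)) := by
    rw [← exp_add]; push_cast; ring_nf
  rw [twistedWeierstrassTerm, twistedWeierstrassTerm, hphase,
    show (Real.pi : ℂ) * (w + ↑(m + 1) * τ) = Real.pi * (w + τ + m * τ) by push_cast; ring]
  ring

theorem tsum_add_period :
    ∑' m, twistedWeierstrassTerm τ μ (w + τ) m =
      exp (Real.pi * I * (1 - (μ : ℂ))) * ∑' m, twistedWeierstrassTerm τ μ w m := by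
  simp only [add_period, tsum_mul_left]
  congr 1
  exact (Equiv.addRight 1).tsum_eq (twistedWeierstrassTerm τ μ w)

end twistedWeierstrassTerm

theorem stmt6_general (τ : ℂ) (hτ : 0 < τ.im) (μ : ℝ)
    (w : ℂ) :
    Summable (fun m : ℤ =>
      ‖Complex.exp (Real.pi * Complex.I * ((μ : ℂ) - 1) * m) * (Real.pi : ℂ) ^ 2 /
        Complex.sin (Real.pi * (w + m * τ)) ^ 2‖) ∧
    (∑' m : ℤ, Complex.exp (Real.pi * Complex.I * ((μ : ℂ) - 1) * m) * (Real.pi : ℂ) ^ 2 /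
        Complex.sin (Real.pi * ((w + 1) + m * τ)) ^ 2)
      = (∑' m : ℤ, Complex.exp (Real.pi * Complex.I * ((μ : ℂ) - 1) * m) * (Real.pi : ℂ) ^ 2 /
          Complex.sin (Real.pi * (w + m * τ)) ^ 2) ∧
    (∑' m : ℤ, Complex.exp (Real.pi * Complex.I * ((μ : ℂ) - 1) * m) * (Real.pi : ℂ) ^ 2 /
        Complex.sin (Real.pi * ((w + τ) + m * τ)) ^ 2)
      = Complex.exp (Real.pi * Complex.I * (1 - (μ : ℂ))) *
        (∑' m : ℤ, Complex.exp (Real.pi * Complex.I * ((μ : ℂ) - 1) * m) * (Real.pi : ℂ) ^ 2 /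
          Complex.sin (Real.pi * (w + m * τ)) ^ 2) :=
  ⟨twistedWeierstrassTerm.summable_norm τ μ w hτ.ne',
    tsum_congr (twistedWeierstrassTerm.add_one τ μ w),
    twistedWeierstrassTerm.tsum_add_period τ μ w⟩

/-- The twisted Weierstrass series `℘_μ(w) = ∑_{m∈ℤ} e^{iπ(μ-1)m} π²/sin²(π(w+mτ))`
converges absolutely at every admissible point `w` (i.e. `w + mτ ∉ ℤ` for all `m`), and the
resulting function satisfies `℘_μ(w+1) = ℘_μ(w)` and `℘_μ(w+τ) = e^{iπ(1-μ)} ℘_μ(w)`. -/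
theorem stmt6 (τ : ℂ) (hτ : 0 < τ.im) (μ : ℝ) (hμ : μ ∈ Set.Ioo (0 : ℝ) 1)
    (w : ℂ) (hw : ∀ m k : ℤ, w + m * τ ≠ k) :
    Summable (fun m : ℤ =>
      ‖Complex.exp (Real.pi * Complex.I * ((μ : ℂ) - 1) * m) * (Real.pi : ℂ) ^ 2 /
        Complex.sin (Real.pi * (w + m * τ)) ^ 2‖) ∧
    (∑' m : ℤ, Complex.exp (Real.pi * Complex.I * ((μ : ℂ) - 1) * m) * (Real.pi : ℂ) ^ 2 /
        Complex.sin (Real.pi * ((w + 1) + m * τ)) ^ 2)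
      = (∑' m : ℤ, Complex.exp (Real.pi * Complex.I * ((μ : ℂ) - 1) * m) * (Real.pi : ℂ) ^ 2 /
          Complex.sin (Real.pi * (w + m * τ)) ^ 2) ∧
    (∑' m : ℤ, Complex.exp (Real.pi * Complex.I * ((μ : ℂ) - 1) * m) * (Real.pi : ℂ) ^ 2 /
        Complex.sin (Real.pi * ((w + τ) + m * τ)) ^ 2)
      = Complex.exp (Real.pi * Complex.I * (1 - (μ : ℂ))) *
        (∑' m : ℤ, Complex.exp (Real.pi * Complex.I * ((μ : ℂ) - 1) * m) * (Real.pi : ℂ) ^ 2 /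
          Complex.sin (Real.pi * (w + m * τ)) ^ 2) :=
  stmt6_general τ hτ μ w
end
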